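/- (Scaling invariance of the class T(r,C₀).) Suppose (A,W) ∈ T(r,C₀), and let x₀ ∈ ℝ^d and 0 < R ≤ 1. Define the rescaled data A_k^{loc}(y) = R·A_k(x₀ + R y), U_ℓ^{loc}(y) = R·U_ℓ(x₀ + R y), V^{loc}(y) = R²·V(x₀ + R y), and W^{loc} = Σ_ℓ (U_ℓ^{loc})² + i V^{loc}. Then (A^{loc}, W^{loc}) ∈ T(r,C₀), with the same constant C₀; moreover the rescaled magnetic field satisfies B_{jk}^{loc}(y) = R²·B_{jk}(x₀ + R y). -/

import Mathlib

open MeasureTheory Real Filter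

noncomputable section

/-- `ℝ^d` with the Euclidean structure. -/
abbrev Rd (d : ℕ) := EuclideanSpace ℝ (Fin d)

/-- Partial derivative `∂_{x_j}` of a complex-valued function. -/
def pdC {d : ℕ} (j : Fin d) (f : Rd d → ℂ) : Rd d → ℂ :=
  fun x => fderiv ℝ f x (EuclideanSpace.single j (1:ℝ))

/-- Partial derivative `∂_{x_j}` of a real-valued function. -/
def pdR {d : ℕ} (j : Fin d) (f : Rd d → ℝ) : Rd d → ℝ :=
  fun x => fderiv ℝ f x (EuclideanSpace.single j (1:ℝ))

/-- Iterated partial derivative in the `j`-th direction. -/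
def pdIter {d : ℕ} (j : Fin d) : ℕ → (Rd d → ℝ) → (Rd d → ℝ)
  | 0, f => f
  | n+1, f => pdR j (pdIter j n f)

/-- Multi-index partial derivative `∂^α`. -/
def pdMulti {d : ℕ} (α : Fin d → ℕ) (f : Rd d → ℝ) : Rd d → ℝ :=
  (List.finRange d).foldr (fun j g => pdIter j (α j) g) f

/-- The finite set of multi-indices `α` with `|α| = q`. -/
def mIdx (d q : ℕ) : Finset (Fin d → ℕ) := Finset.Nat.antidiagonalTuple d q

/-- The magnetic field `B_{jk} = ∂_j A_k - ∂_k A_j`. -/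
def magB {d : ℕ} (A : Fin d → Rd d → ℝ) (j k : Fin d) : Rd d → ℝ :=
  fun x => pdR j (A k) x - pdR k (A j) x

/-- The quantity `m̌_q(x)`. -/
def mq {d p : ℕ} (A : Fin d → Rd d → ℝ) (U : Fin p → Rd d → ℝ) (V : Rd d → ℝ) :
    ℕ → Rd d → ℝ
  | 0, x => ∑ ℓ, |U ℓ x|
  | q+1, x =>
      (∑ ℓ, ∑ α ∈ mIdx d (q+1), |pdMulti α (U ℓ) x|)
      + (∑ jk ∈ Finset.univ.filter (fun jk : Fin d × Fin d => jk.1 < jk.2),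
          ∑ α ∈ mIdx d q, |pdMulti α (magB A jk.1 jk.2) x|)
      + ∑ α ∈ mIdx d q, |pdMulti α V x|

/-- The quantity `m̌ʳ(x) = 1 + ∑_{q=0}^r m̌_q(x)`. -/
def mr {d p : ℕ} (A : Fin d → Rd d → ℝ) (U : Fin p → Rd d → ℝ) (V : Rd d → ℝ)
    (r : ℕ) (x : Rd d) : ℝ :=
  1 + ∑ q ∈ Finset.range (r+1), mq A U V q x

/-- The magnetic derivative `X_j u = (D_{x_j} - A_j) u`, `D_{x_j} = -i ∂_{x_j}`. -/
def Xop {d : ℕ} (A : Fin d → Rd d → ℝ) (j : Fin d) (u : Rd d → ℂ) : Rd d → ℂ :=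
  fun x => -Complex.I * pdC j u x - (A j x : ℂ) * u x

/-- The potential `W = ∑_ℓ U_ℓ² + iV`. -/
def Wfun {d p : ℕ} (U : Fin p → Rd d → ℝ) (V : Rd d → ℝ) (x : Rd d) : ℂ :=
  ((∑ ℓ, (U ℓ x)^2 : ℝ) : ℂ) + (V x : ℝ) * Complex.I

/-- The operator `P_{A,W} u = ∑_j X_j² u + W u` with `W = ∑_ℓ U_ℓ² + iV`. -/
def Pop {d p : ℕ} (A : Fin d → Rd d → ℝ) (U : Fin p → Rd d → ℝ) (V : Rd d → ℝ)
    (u : Rd d → ℂ) : Rd d → ℂ :=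
  fun x => (∑ j, Xop A j (Xop A j u) x) + Wfun U V x * u x

/-- The function `Φ(x,t)`. -/
def Phi {d p : ℕ} (A : Fin d → Rd d → ℝ) (U : Fin p → Rd d → ℝ) (V : Rd d → ℝ)
    (r : ℕ) (x : Rd d) (t : ℝ) : ℝ :=
  (∑ ℓ, ∑ q ∈ Finset.range (r+1), t^(q+1) * ∑ α ∈ mIdx d q, |pdMulti α (U ℓ) x|)
  + (∑ jk ∈ Finset.univ.filter (fun jk : Fin d × Fin d => jk.1 < jk.2),
      ∑ q ∈ Finset.range r, t^(q+2) * ∑ α ∈ mIdx d q, |pdMulti α (magB A jk.1 jk.2) x|)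
  + ∑ q ∈ Finset.range r, t^(q+2) * ∑ α ∈ mIdx d q, |pdMulti α V x|

/-- `R(x,μ) = sup { t ∈ [0,1] : Φ(x,t) ≤ μ }`. -/
def Rfun {d p : ℕ} (A : Fin d → Rd d → ℝ) (U : Fin p → Rd d → ℝ) (V : Rd d → ℝ)
    (r : ℕ) (x : Rd d) (μ : ℝ) : ℝ :=
  sSup {t : ℝ | t ∈ Set.Icc (0:ℝ) 1 ∧ Phi A U V r x t ≤ μ}


/-- The rescaled magnetic potential `A^{loc}_m(y) = R A_m(x₀ + R y)`. -/
def rescaleA {d : ℕ} (A : Fin d → Rd d → ℝ) (x₀ : Rd d) (R : ℝ) :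
    Fin d → Rd d → ℝ :=
  fun m y => R * A m (x₀ + R • y)

/-- The rescaled electric potentials `U_ℓ^{loc}(y) = R U_ℓ(x₀ + R y)`. -/
def rescaleU {d p : ℕ} (U : Fin p → Rd d → ℝ) (x₀ : Rd d) (R : ℝ) :
    Fin p → Rd d → ℝ :=
  fun ℓ y => R * U ℓ (x₀ + R • y)

/-- The rescaled imaginary potential `V^{loc}(y) = R² V(x₀ + R y)`. -/
def rescaleV {d : ℕ} (V : Rd d → ℝ) (x₀ : Rd d) (R : ℝ) : Rd d → ℝ :=
  fun y => R^2 * V (x₀ + R • y)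

section helpers

variable {d : ℕ}

lemma contDiff_pdR (j : Fin d) {f : Rd d → ℝ} (hf : ContDiff ℝ (⊤ : ℕ∞) f) :
    ContDiff ℝ (⊤ : ℕ∞) (pdR j f) :=
  (hf.fderiv_right (by simp)).clm_apply contDiff_const

lemma contDiff_pdIter (j : Fin d) (n : ℕ) {f : Rd d → ℝ} (hf : ContDiff ℝ (⊤ : ℕ∞) f) :
    ContDiff ℝ (⊤ : ℕ∞) (pdIter j n f) := by
  induction n with
  | zero => exact hf
  | succ n ih => exact contDiff_pdR j ih

lemma contDiff_foldr (L : List (Fin d)) (α : Fin d → ℕ) {f : Rd d → ℝ}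
    (hf : ContDiff ℝ (⊤ : ℕ∞) f) :
    ContDiff ℝ (⊤ : ℕ∞) (L.foldr (fun j g => pdIter j (α j) g) f) := by
  induction L with
  | nil => exact hf
  | cons j L ih => exact contDiff_pdIter j (α j) ih

lemma pdR_key (j : Fin d) (c : ℝ) {f : Rd d → ℝ} (hf : ContDiff ℝ (⊤ : ℕ∞) f)
    (x₀ : Rd d) (R : ℝ) :
    pdR j (fun y => c * f (x₀ + R • y)) = fun y => c * R * pdR j f (x₀ + R • y) := by
  funext y
  have hφ : HasFDerivAt (fun y : Rd d => x₀ + R • y)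
      (R • ContinuousLinearMap.id ℝ (Rd d)) y :=
    ((hasFDerivAt_id y).const_smul R).const_add x₀
  have hf' : HasFDerivAt f (fderiv ℝ f (x₀ + R • y)) (x₀ + R • y) :=
    (hf.differentiable (by simp) _).hasFDerivAt
  have hcomp : HasFDerivAt (fun y : Rd d => f (x₀ + R • y))
      ((fderiv ℝ f (x₀ + R • y)).comp (R • ContinuousLinearMap.id ℝ (Rd d))) y :=
    hf'.comp y hφ
  have h := hcomp.const_mul c
  rw [pdR, h.fderiv]
  simp only [ContinuousLinearMap.coe_smul', Pi.smul_apply, ContinuousLinearMap.coe_comp',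
    Function.comp_apply, ContinuousLinearMap.smul_apply, ContinuousLinearMap.coe_id', id_eq,
    ContinuousLinearMap.map_smul, smul_eq_mul]
  show c * (R * pdR j f (x₀ + R • y)) = _
  ring

lemma pdIter_key (j : Fin d) (n : ℕ) (c : ℝ) {f : Rd d → ℝ} (hf : ContDiff ℝ (⊤ : ℕ∞) f)
    (x₀ : Rd d) (R : ℝ) :
    pdIter j n (fun y => c * f (x₀ + R • y))
      = fun y => c * R ^ n * pdIter j n f (x₀ + R • y) := by
  induction n with
  | zero => funext y; simp [pdIter]
  | succ n ih =>
      show pdR j (pdIter j n (fun y => c * f (x₀ + R • y))) = _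
      rw [ih, pdR_key j (c * R ^ n) (contDiff_pdIter j n hf) x₀ R]
      funext y
      show c * R ^ n * R * pdR j (pdIter j n f) (x₀ + R • y) = _
      rw [show pdIter j (n+1) f = pdR j (pdIter j n f) from rfl]
      try ring

lemma foldr_key (L : List (Fin d)) (α : Fin d → ℕ) (c : ℝ) {f : Rd d → ℝ}
    (hf : ContDiff ℝ (⊤ : ℕ∞) f) (x₀ : Rd d) (R : ℝ) :
    L.foldr (fun j g => pdIter j (α j) g) (fun y => c * f (x₀ + R • y))
      = fun y => c * R ^ ((L.map α).sum)
          * (L.foldr (fun j g => pdIter j (α j) g) f) (x₀ + R • y) := by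
  induction L with
  | nil => funext y; simp
  | cons j L ih =>
      show pdIter j (α j) (L.foldr (fun j g => pdIter j (α j) g)
          (fun y => c * f (x₀ + R • y))) = _
      rw [ih, pdIter_key j (α j) _ (contDiff_foldr L α hf) x₀ R]
      funext y
      simp only [List.map_cons, List.sum_cons, List.foldr_cons]
      ring

lemma pdMulti_key (α : Fin d → ℕ) (c : ℝ) {f : Rd d → ℝ} (hf : ContDiff ℝ (⊤ : ℕ∞) f)
    (x₀ : Rd d) (R : ℝ) :
    pdMulti α (fun y => c * f (x₀ + R • y))
      = fun y => c * R ^ (∑ j, α j) * pdMulti α f (x₀ + R • y) := by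
  have h := foldr_key (List.finRange d) α c hf x₀ R
  rw [pdMulti, h, Fin.sum_univ_def]
  rfl

lemma contDiff_magB {A : Fin d → Rd d → ℝ} (hA : ∀ j, ContDiff ℝ (⊤ : ℕ∞) (A j))
    (j k : Fin d) : ContDiff ℝ (⊤ : ℕ∞) (magB A j k) :=
  (contDiff_pdR j (hA k)).sub (contDiff_pdR k (hA j))

lemma magB_rescale (A : Fin d → Rd d → ℝ) (hA : ∀ j, ContDiff ℝ (⊤ : ℕ∞) (A j))
    (x₀ : Rd d) (R : ℝ) (j k : Fin d) :
    magB (rescaleA A x₀ R) j k = fun y => R ^ 2 * magB A j k (x₀ + R • y) := by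
  funext y
  have h1 : rescaleA A x₀ R k = fun y => R * A k (x₀ + R • y) := rfl
  have h2 : rescaleA A x₀ R j = fun y => R * A j (x₀ + R • y) := rfl
  rw [magB, h1, h2, pdR_key j R (hA k) x₀ R, pdR_key k R (hA j) x₀ R]
  show R * R * pdR j (A k) (x₀ + R • y) - R * R * pdR k (A j) (x₀ + R • y) = _
  rw [magB]
  ring

lemma mq_rescale {p : ℕ} (A : Fin d → Rd d → ℝ) (U : Fin p → Rd d → ℝ)
    (V : Rd d → ℝ) (hA : ∀ j, ContDiff ℝ (⊤ : ℕ∞) (A j)) (hU : ∀ ℓ, ContDiff ℝ (⊤ : ℕ∞) (U ℓ))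
    (hV : ContDiff ℝ (⊤ : ℕ∞) V) (x₀ : Rd d) (R : ℝ) (hR0 : 0 < R) (q : ℕ) (y : Rd d) :
    mq (rescaleA A x₀ R) (rescaleU U x₀ R) (rescaleV V x₀ R) q y
      = R ^ (q + 1) * mq A U V q (x₀ + R • y) := by
  have hRabs : |R| = R := abs_of_pos hR0
  cases q with
  | zero =>
      simp only [mq, rescaleU, Finset.mul_sum, abs_mul, hRabs, pow_one]
      exact Finset.sum_congr rfl fun ℓ _ => by ring
  | succ q =>
      have hUterm : ∀ ℓ, ∀ α ∈ mIdx d (q+1),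
          |pdMulti α (rescaleU U x₀ R ℓ) y|
            = R ^ (q + 2) * |pdMulti α (U ℓ) (x₀ + R • y)| := by
        intro ℓ α hα
        have hsum : ∑ j, α j = q + 1 := Finset.Nat.mem_antidiagonalTuple.mp hα
        have h1 : rescaleU U x₀ R ℓ = fun y => R * U ℓ (x₀ + R • y) := rfl
        rw [h1, pdMulti_key α R (hU ℓ) x₀ R, hsum]
        rw [abs_mul, abs_mul, hRabs, abs_pow, hRabs]
        ring
      have hBterm : ∀ (j k : Fin d), ∀ α ∈ mIdx d q,
          |pdMulti α (magB (rescaleA A x₀ R) j k) y|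
            = R ^ (q + 2) * |pdMulti α (magB A j k) (x₀ + R • y)| := by
        intro j k α hα
        have hsum : ∑ j, α j = q := Finset.Nat.mem_antidiagonalTuple.mp hα
        rw [magB_rescale A hA x₀ R j k,
          pdMulti_key α (R ^ 2) (contDiff_magB hA j k) x₀ R, hsum]
        rw [abs_mul, abs_mul, abs_pow, abs_pow, hRabs]
        ring
      have hVterm : ∀ α ∈ mIdx d q,
          |pdMulti α (rescaleV V x₀ R) y|
            = R ^ (q + 2) * |pdMulti α V (x₀ + R • y)| := by
        intro α hα
        have hsum : ∑ j, α j = q := Finset.Nat.mem_antidiagonalTuple.mp hα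
        have h1 : rescaleV V x₀ R = fun y => R ^ 2 * V (x₀ + R • y) := rfl
        rw [h1, pdMulti_key α (R ^ 2) hV x₀ R, hsum]
        rw [abs_mul, abs_mul, abs_pow, abs_pow, hRabs]
        ring
      show (∑ ℓ, ∑ α ∈ mIdx d (q+1), |pdMulti α (rescaleU U x₀ R ℓ) y|)
          + (∑ jk ∈ Finset.univ.filter (fun jk : Fin d × Fin d => jk.1 < jk.2),
              ∑ α ∈ mIdx d q, |pdMulti α (magB (rescaleA A x₀ R) jk.1 jk.2) y|)
          + ∑ α ∈ mIdx d q, |pdMulti α (rescaleV V x₀ R) y| = _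
      rw [show (q + 1 + 1 : ℕ) = q + 2 from rfl]
      have e1 : (∑ ℓ, ∑ α ∈ mIdx d (q+1), |pdMulti α (rescaleU U x₀ R ℓ) y|)
          = R ^ (q+2) * ∑ ℓ, ∑ α ∈ mIdx d (q+1), |pdMulti α (U ℓ) (x₀ + R • y)| := by
        rw [Finset.mul_sum]
        refine Finset.sum_congr rfl fun ℓ _ => ?_
        rw [Finset.mul_sum]
        exact Finset.sum_congr rfl (hUterm ℓ)
      have e2 : (∑ jk ∈ Finset.univ.filter (fun jk : Fin d × Fin d => jk.1 < jk.2),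
              ∑ α ∈ mIdx d q, |pdMulti α (magB (rescaleA A x₀ R) jk.1 jk.2) y|)
          = R ^ (q+2) * ∑ jk ∈ Finset.univ.filter (fun jk : Fin d × Fin d => jk.1 < jk.2),
              ∑ α ∈ mIdx d q, |pdMulti α (magB A jk.1 jk.2) (x₀ + R • y)| := by
        rw [Finset.mul_sum]
        refine Finset.sum_congr rfl fun jk _ => ?_
        rw [Finset.mul_sum]
        exact Finset.sum_congr rfl (hBterm jk.1 jk.2)
      have e3 : (∑ α ∈ mIdx d q, |pdMulti α (rescaleV V x₀ R) y|)
          = R ^ (q+2) * ∑ α ∈ mIdx d q, |pdMulti α V (x₀ + R • y)| := by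
        rw [Finset.mul_sum]
        exact Finset.sum_congr rfl hVterm
      rw [e1, e2, e3]
      show _ = R ^ (q + 2) * ((∑ ℓ, ∑ α ∈ mIdx d (q+1), |pdMulti α (U ℓ) (x₀ + R • y)|)
          + (∑ jk ∈ Finset.univ.filter (fun jk : Fin d × Fin d => jk.1 < jk.2),
              ∑ α ∈ mIdx d q, |pdMulti α (magB A jk.1 jk.2) (x₀ + R • y)|)
          + ∑ α ∈ mIdx d q, |pdMulti α V (x₀ + R • y)|)
      ring

lemma mq_nonneg {p : ℕ} (A : Fin d → Rd d → ℝ) (U : Fin p → Rd d → ℝ)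
    (V : Rd d → ℝ) (q : ℕ) (x : Rd d) : 0 ≤ mq A U V q x := by
  cases q with
  | zero => exact Finset.sum_nonneg fun ℓ _ => abs_nonneg _
  | succ q =>
      have h1 : (0:ℝ) ≤ ∑ ℓ, ∑ α ∈ mIdx d (q+1), |pdMulti α (U ℓ) x| :=
        Finset.sum_nonneg fun ℓ _ => Finset.sum_nonneg fun α _ => abs_nonneg _
      have h2 : (0:ℝ) ≤ ∑ jk ∈ Finset.univ.filter (fun jk : Fin d × Fin d => jk.1 < jk.2),
          ∑ α ∈ mIdx d q, |pdMulti α (magB A jk.1 jk.2) x| :=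
        Finset.sum_nonneg fun jk _ => Finset.sum_nonneg fun α _ => abs_nonneg _
      have h3 : (0:ℝ) ≤ ∑ α ∈ mIdx d q, |pdMulti α V x| :=
        Finset.sum_nonneg fun α _ => abs_nonneg _
      show (0:ℝ) ≤ _ + _ + _
      linarith

end helpers

/-- scaling invariance of the class `T(r,C₀)`. -/
theorem statement_18 (d p r : ℕ) (hd : 1 ≤ d) (hr : 1 ≤ r)
    (A : Fin d → Rd d → ℝ) (U : Fin p → Rd d → ℝ) (V : Rd d → ℝ)
    (hA : ∀ j, ContDiff ℝ (⊤ : ℕ∞) (A j)) (hU : ∀ ℓ, ContDiff ℝ (⊤ : ℕ∞) (U ℓ)) (hV : ContDiff ℝ (⊤ : ℕ∞) V)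
    (C₀ : ℝ) (hC₀ : 0 < C₀)
    (hT : ∀ x, mq A U V (r+1) x ≤ C₀ * mr A U V r x)
    (x₀ : Rd d) (R : ℝ) (hR0 : 0 < R) (hR1 : R ≤ 1) :
    (∀ y, mq (rescaleA A x₀ R) (rescaleU U x₀ R) (rescaleV V x₀ R) (r+1) y
        ≤ C₀ * mr (rescaleA A x₀ R) (rescaleU U x₀ R) (rescaleV V x₀ R) r y) ∧
    (∀ (j k : Fin d) (y : Rd d),
      magB (rescaleA A x₀ R) j k y = R^2 * magB A j k (x₀ + R • y)) := by
  constructor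
  · intro y
    rw [mq_rescale A U V hA hU hV x₀ R hR0 (r+1) y]
    have hmr : mr (rescaleA A x₀ R) (rescaleU U x₀ R) (rescaleV V x₀ R) r y
        = 1 + ∑ q ∈ Finset.range (r+1), R ^ (q+1) * mq A U V q (x₀ + R • y) := by
      rw [mr]
      congr 1
      exact Finset.sum_congr rfl fun q _ =>
        mq_rescale A U V hA hU hV x₀ R hR0 q y
    rw [hmr]
    have h1 := hT (x₀ + R • y)
    have hRpow : (0:ℝ) ≤ R ^ (r+2) := pow_nonneg hR0.le _
    have h2 : R ^ (r+1+1) * mq A U V (r+1) (x₀ + R • y)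
        ≤ R ^ (r+2) * (C₀ * mr A U V r (x₀ + R • y)) := by
      exact mul_le_mul_of_nonneg_left h1 hRpow
    have key : R ^ (r+2) * mr A U V r (x₀ + R • y)
        ≤ 1 + ∑ q ∈ Finset.range (r+1), R ^ (q+1) * mq A U V q (x₀ + R • y) := by
      rw [mr, mul_add, mul_one, Finset.mul_sum]
      refine add_le_add (pow_le_one₀ hR0.le hR1) (Finset.sum_le_sum ?_)
      intro q hq
      have hq' : q + 1 ≤ r + 2 := by
        have := Finset.mem_range.mp hq
        omega
      exact mul_le_mul_of_nonneg_right (pow_le_pow_of_le_one hR0.le hR1 hq')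
        (mq_nonneg A U V q _)
    calc R ^ (r+1+1) * mq A U V (r+1) (x₀ + R • y)
        ≤ R ^ (r+2) * (C₀ * mr A U V r (x₀ + R • y)) := h2
      _ = C₀ * (R ^ (r+2) * mr A U V r (x₀ + R • y)) := by ring
      _ ≤ C₀ * (1 + ∑ q ∈ Finset.range (r+1), R ^ (q+1) * mq A U V q (x₀ + R • y)) :=
          mul_le_mul_of_nonneg_left key hC₀.le
  · intro j k y
    exact congrFun (magB_rescale A hA x₀ R j k) y

end
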